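/- If (S_n)_{n∈ℕ} is a countable family of subsets of ℕ, each of density one, then there exists a single set S ⊆ ℕ of density one such that for each n, S \ S_n is finite, i.e. S is eventually contained in every S_n. -/

import Mathlib

/-!
Replace the `S n` by the decreasing intersections `A k = ⋂ i ≤ k, S i`, which still have density
one. A diagonal argument gives a slowly growing monotone `κ → ∞` along which the partial densities
of `A (κ N)` up to `N` still tend to one. The set `T = {j | j ∈ A (κ j)}` contains `A (κ N) ∩ [1, N]`
by monotonicity of `κ`, so it has density one, and `T \ S n ⊆ {j | κ j < n}` is finite.
-/

open Filter Topology
open scoped Classical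

/-- A set `S ⊆ ℕ` has density one. -/
def DensityOne (S : Set ℕ) : Prop :=
  Tendsto (fun N : ℕ => (((Finset.Icc 1 N).filter (fun j => j ∈ S)).card : ℝ) / N)
    atTop (𝓝 1)

theorem Filter.exists_monotone_tendsto_diag {α : Type*} {l : Filter α} [l.IsCountablyGenerated]
    {u : ℕ → ℕ → α} (hu : ∀ k, Tendsto (u k) atTop l) :
    ∃ κ : ℕ → ℕ, Monotone κ ∧ Tendsto κ atTop atTop ∧ Tendsto (fun N => u (κ N) N) atTop l := by
  obtain ⟨V, hV⟩ := l.exists_antitone_basis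
  obtain ⟨φ, hφ, hφV⟩ : ∃ φ : ℕ → ℕ, StrictMono φ ∧ ∀ k, ∀ N ≥ φ k, u k N ∈ V k := by
    refine extraction_forall_of_eventually' (P := fun k M => ∀ N ≥ M, u k N ∈ V k) fun k => ?_
    obtain ⟨M, hM⟩ := eventually_atTop.1 ((hu k).eventually (hV.mem k))
    exact ⟨M, fun M' hM' N hN => hM N (hM'.trans hN)⟩
  let κ : ℕ → ℕ := fun N => Nat.findGreatest (fun k => φ k ≤ N) N
  have le_κ : ∀ k N, φ k ≤ N → k ≤ κ N := fun k N h => Nat.le_findGreatest ((hφ.id_le k).trans h) h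
  have φ_κ_le : ∀ N, φ 0 ≤ N → φ (κ N) ≤ N := fun N h =>
    Nat.findGreatest_spec (P := fun k => φ k ≤ N) N.zero_le h
  refine ⟨κ, fun m n hmn => Nat.findGreatest_mono (fun k hk => hk.trans hmn) hmn,
    tendsto_atTop_atTop.2 fun k => ⟨φ k, le_κ k⟩, hV.tendsto_right_iff.2 fun i _ => ?_⟩
  filter_upwards [eventually_ge_atTop (φ i)] with N hN
  exact hV.antitone (le_κ i N hN) (hφV _ N (φ_κ_le N ((hφ.monotone i.zero_le).trans hN)))

noncomputable def countUpTo (S : Set ℕ) (N : ℕ) : ℕ :=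
  ((Finset.Icc 1 N).filter (fun j => j ∈ S)).card

noncomputable def partialDensity (S : Set ℕ) (N : ℕ) : ℝ :=
  (countUpTo S N : ℝ) / N

theorem densityOne_iff_tendsto_partialDensity {S : Set ℕ} :
    DensityOne S ↔ Tendsto (partialDensity S) atTop (𝓝 1) :=
  Iff.rfl

theorem partialDensity_le_one (S : Set ℕ) (N : ℕ) : partialDensity S N ≤ 1 := by
  refine div_le_one_of_le₀ ?_ N.cast_nonneg
  exact_mod_cast (Finset.card_filter_le _ _).trans (Nat.card_Icc 1 N).le

theorem partialDensity_le_of_forall {S T : Set ℕ} {N : ℕ} (h : ∀ j ≤ N, j ∈ S → j ∈ T) :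
    partialDensity S N ≤ partialDensity T N := by
  refine div_le_div_of_nonneg_right ?_ N.cast_nonneg
  exact_mod_cast Finset.card_le_card
    (Finset.monotone_filter_right _ fun j hj hS => h j (Finset.mem_Icc.1 hj).2 hS)

theorem countUpTo_add_le (S T : Set ℕ) (N : ℕ) :
    countUpTo S N + countUpTo T N ≤ countUpTo (S ∩ T) N + N := by
  have hunion : ((Finset.Icc 1 N).filter (· ∈ S) ∪ (Finset.Icc 1 N).filter (· ∈ T)).card ≤ N :=
    (Finset.card_le_card (Finset.union_subset (Finset.filter_subset _ _)
      (Finset.filter_subset _ _))).trans (Nat.card_Icc 1 N).le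
  unfold countUpTo
  rw [← Finset.card_union_add_card_inter, add_comm _ N]
  refine Nat.add_le_add hunion (Finset.card_le_card fun j hj => ?_)
  simp only [Finset.mem_inter, Finset.mem_filter] at hj ⊢
  exact ⟨hj.1.1, hj.1.2, hj.2.2⟩

theorem partialDensity_add_le (S T : Set ℕ) (N : ℕ) :
    partialDensity S N + partialDensity T N ≤ partialDensity (S ∩ T) N + 1 := by
  rcases N.eq_zero_or_pos with rfl | hN
  · simp [partialDensity]
  have hN' : (N : ℝ) ≠ 0 := by exact_mod_cast hN.ne'
  have hcard := countUpTo_add_le S T N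
  unfold partialDensity
  rw [← add_div, ← div_self hN', ← add_div]
  exact div_le_div_of_nonneg_right (by exact_mod_cast hcard) N.cast_nonneg

namespace DensityOne

theorem univ : DensityOne Set.univ := by
  refine tendsto_const_nhds.congr' (eventually_ge_atTop 1 |>.mono fun N hN => ?_)
  have hN' : (N : ℝ) ≠ 0 := by exact_mod_cast (Nat.one_le_iff_ne_zero.1 hN)
  simp [hN']

theorem inter {S T : Set ℕ} (hS : DensityOne S) (hT : DensityOne T) : DensityOne (S ∩ T) := by
  rw [densityOne_iff_tendsto_partialDensity] at *
  have hlower : Tendsto (fun N => partialDensity S N + partialDensity T N - 1) atTop (𝓝 1) := by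
    simpa using (hS.add hT).sub_const 1
  exact tendsto_of_tendsto_of_tendsto_of_le_of_le hlower tendsto_const_nhds
    (fun N => by linarith [partialDensity_add_le S T N]) (partialDensity_le_one _)

theorem biInter_finset {ι : Type*} {s : Finset ι} {S : ι → Set ℕ}
    (h : ∀ i ∈ s, DensityOne (S i)) : DensityOne (⋂ i ∈ s, S i) := by
  induction s using Finset.induction_on with
  | empty => simpa using univ
  | insert i s hi ih =>
    rw [Finset.set_biInter_insert]
    exact inter (h i (s.mem_insert_self i)) (ih fun j hj => h j (Finset.mem_insert_of_mem hj))

end DensityOne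

theorem stmt_1 (S : ℕ → Set ℕ) (hS : ∀ n, DensityOne (S n)) :
    ∃ T : Set ℕ, DensityOne T ∧ ∀ n, (T \ S n).Finite := by
  set A : ℕ → Set ℕ := fun k => ⋂ i ∈ Finset.Iic k, S i
  have hA : ∀ k, DensityOne (A k) := fun k => DensityOne.biInter_finset fun i _ => hS i
  have hA_anti : Antitone A := fun k l hkl =>
    Set.biInter_subset_biInter_left (Finset.coe_subset.2 (Finset.Iic_subset_Iic.2 hkl))
  obtain ⟨κ, hκ_mono, hκ_top, hκA⟩ := Filter.exists_monotone_tendsto_diag hA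
  refine ⟨{j | j ∈ A (κ j)}, ?_, fun n => ?_⟩
  · exact densityOne_iff_tendsto_partialDensity.2 <|
      tendsto_of_tendsto_of_tendsto_of_le_of_le hκA tendsto_const_nhds
        (fun N => partialDensity_le_of_forall fun j hj hjA => hA_anti (hκ_mono hj) hjA)
        (partialDensity_le_one _)
  · have hfin : {j | κ j < n}.Finite := by
      have hge := hκ_top.eventually_ge_atTop n
      rw [← Nat.cofinite_eq_atTop, eventually_cofinite] at hge
      simpa using hge
    refine hfin.subset fun j ⟨hjA, hjS⟩ => show κ j < n from not_le.1 fun hn => hjS ?_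
    exact Set.biInter_subset_of_mem (Finset.mem_Iic.2 le_rfl) (hA_anti hn hjA)
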